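/- Let N ≥ 1, let μ₀, …, μ_N be σ-finite measures on ℝ, and let g_k : ℝ × ℝ → [0, ∞) be measurable for k = 0, …, N−1, such that the function (x₀, …, x_N) ↦ ∏_{k=0}^{N−1} g_k(x_k, x_{k+1}) is integrable with respect to the product measure μ₀ ⊗ ⋯ ⊗ μ_N. Let P be the measure on ℝ^{N+1} with this density with respect to μ₀ ⊗ ⋯ ⊗ μ_N. Then for each i ∈ {0, …, N−1}, the pushforward of P under the projection onto the pair of coordinates (i, i+1) has density (x, y) ↦ u_i(x) · g_i(x, y) · d_{i+1}(y) with respect to μ_i ⊗ μ_{i+1}, where u_i(x) = ∫ ∏_{k=0}^{i−1} g_k(x_k, x_{k+1}) d(μ₀ ⊗ ⋯ ⊗ μ_{i−1}) evaluated with x_i = x (and u_0 ≡ 1), and d_{i+1}(y) = ∫ ∏_{k=i+1}^{N−1} g_k(x_k, x_{k+1}) d(μ_{i+2} ⊗ ⋯ ⊗ μ_N) evaluated with x_{i+1} = y (and d_N ≡ 1). -/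

import Mathlib

/-! Cutting the path at the edge `(i, i+1)` splits the coordinates into the pair `(xᵢ, xᵢ₊₁)`,
the past `(x₀, …, xᵢ₋₁)` and the future `(xᵢ₊₂, …, x_N)`, and the product reference measure
splits accordingly. The density factorizes as a function of the past and `xᵢ`, times
`gᵢ(xᵢ, xᵢ₊₁)`, times a function of `xᵢ₊₁` and the future, so Tonelli's theorem integrates out
the past and the future separately, producing `uᵢ(xᵢ)` and `dᵢ₊₁(xᵢ₊₁)`. -/

open MeasureTheory
open scoped ENNReal

/-- The pairwise-factorized density `(x₀,…,x_N) ↦ ∏_{k=0}^{N−1} g_k(x_k, x_{k+1})`. -/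
noncomputable def pathProd (N : ℕ) (g : Fin N → ℝ → ℝ → ℝ) (x : Fin (N + 1) → ℝ) : ℝ≥0∞ :=
  ∏ k : Fin N, ENNReal.ofReal (g k (x k.castSucc) (x k.succ))

/-- The "up" potential `u_i(x) = ∫ ∏_{k=0}^{i−1} g_k(x_k, x_{k+1}) d(μ₀ ⊗ ⋯ ⊗ μ_{i−1})`,
with the `i`-th coordinate fixed at `x` (so `u_0 ≡ 1`). -/
noncomputable def upPot (N : ℕ) (μ : Fin (N + 1) → Measure ℝ) (g : Fin N → ℝ → ℝ → ℝ)
    (i : ℕ) (hi : i ≤ N) (x : ℝ) : ℝ≥0∞ :=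
  ∫⁻ y : Fin i → ℝ,
    ∏ k : Fin i,
      ENNReal.ofReal (g (Fin.castLE hi k)
        ((Fin.snoc y x : Fin (i + 1) → ℝ) k.castSucc)
        ((Fin.snoc y x : Fin (i + 1) → ℝ) k.succ))
    ∂(Measure.pi fun j : Fin i => μ (Fin.castLE (by omega) j))

/-- The "down" potential `d_i(x) = ∫ ∏_{k=i}^{N−1} g_k(x_k, x_{k+1}) d(μ_{i+1} ⊗ ⋯ ⊗ μ_N)`,
with the `i`-th coordinate fixed at `x` (so `d_N ≡ 1`). -/
noncomputable def downPot (N : ℕ) (μ : Fin (N + 1) → Measure ℝ) (g : Fin N → ℝ → ℝ → ℝ)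
    (i : ℕ) (hi : i ≤ N) (x : ℝ) : ℝ≥0∞ :=
  ∫⁻ y : Fin (N - i) → ℝ,
    ∏ l : Fin (N - i),
      ENNReal.ofReal (g ⟨i + l.val, by have := l.isLt; omega⟩
        ((Fin.cons x y : Fin (N - i + 1) → ℝ) l.castSucc)
        ((Fin.cons x y : Fin (N - i + 1) → ℝ) l.succ))
    ∂(Measure.pi fun j : Fin (N - i) => μ ⟨i + 1 + j.val, by have := j.isLt; omega⟩)

namespace MeasureTheory

variable {α β X : Type*} [MeasurableSpace α] [MeasurableSpace β] [MeasurableSpace X]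

theorem MeasurePreserving.map_withDensity_eq_withDensity_lintegral
    {μ : Measure X} {ν : Measure α} {ρ : Measure β} [SFinite ν] [SFinite ρ]
    {e : α × β → X} {π : X → α} (he : MeasurePreserving e (ν.prod ρ) μ) (hπ : Measurable π)
    (hπe : ∀ p, π (e p) = p.1) {f : X → ℝ≥0∞} (hf : Measurable f) :
    (μ.withDensity f).map π = ν.withDensity fun a => ∫⁻ b, f (e (a, b)) ∂ρ := by
  ext s hs
  have hpre : e ⁻¹' (π ⁻¹' s) = s ×ˢ Set.univ := by ext p; simp [hπe]
  rw [Measure.map_apply hπ hs, withDensity_apply _ (hπ hs), withDensity_apply _ hs,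
    ← he.setLIntegral_comp_preimage (hπ hs) hf, hpre,
    setLIntegral_prod (fun p => f (e p)) (hf.comp he.measurable).aemeasurable,
    Measure.restrict_univ]

theorem measurePreserving_prodProdProdComm {γ δ : Type*} [MeasurableSpace γ] [MeasurableSpace δ]
    (μa : Measure α) (μb : Measure β) (μc : Measure γ) (μd : Measure δ)
    [SFinite μa] [SFinite μb] [SFinite μc] [SFinite μd] :
    MeasurePreserving (Equiv.prodProdProdComm α β γ δ)
      ((μa.prod μb).prod (μc.prod μd)) ((μa.prod μc).prod (μb.prod μd)) := by
  have hmid : MeasurePreserving (fun p : (β × γ) × δ => ((p.1.2, p.1.1), p.2))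
      ((μb.prod μc).prod μd) ((μc.prod μb).prod μd) :=
    (Measure.measurePreserving_swap (μ := μb) (ν := μc)).prod (MeasurePreserving.id μd)
  exact (measurePreserving_prodAssoc μa μc (μb.prod μd)).symm.comp
    (((MeasurePreserving.id μa).prod ((measurePreserving_prodAssoc μc μb μd).comp
      (hmid.comp (measurePreserving_prodAssoc μb μc μd).symm))).comp
    (measurePreserving_prodAssoc μa μb (μc.prod μd)))

theorem measurePreserving_finAppend {m n : ℕ} (μ : Fin (m + n) → Measure α)
    [∀ j, SigmaFinite (μ j)] :
    MeasurePreserving (fun p : (Fin m → α) × (Fin n → α) => Fin.append p.1 p.2)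
      ((Measure.pi fun j => μ (Fin.castAdd n j)).prod (Measure.pi fun j => μ (Fin.natAdd m j)))
      (Measure.pi μ) := by
  have hmeas : Measurable fun p : (Fin m → α) × (Fin n → α) => Fin.append p.1 p.2 := by
    refine measurable_pi_lambda _ fun j => ?_
    induction j using Fin.addCases with
    | left j => simp only [Fin.append_left]; fun_prop
    | right j => simp only [Fin.append_right]; fun_prop
  refine ⟨hmeas, (Measure.pi_eq fun s hs => ?_).symm⟩
  have hpre : (fun p : (Fin m → α) × (Fin n → α) => Fin.append p.1 p.2) ⁻¹' Set.univ.pi s =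
      Set.univ.pi (fun j => s (Fin.castAdd n j)) ×ˢ Set.univ.pi (fun j => s (Fin.natAdd m j)) := by
    ext p; simp [Fin.forall_fin_add]
  rw [Measure.map_apply hmeas (.univ_pi hs), hpre, Measure.prod_prod, Measure.pi_pi,
    Measure.pi_pi, Fin.prod_univ_add]

theorem measurePreserving_finSnoc {n : ℕ} (μ : Fin (n + 1) → Measure α) [∀ j, SigmaFinite (μ j)] :
    MeasurePreserving (fun p : α × (Fin n → α) => (Fin.snoc p.2 p.1 : Fin (n + 1) → α))
      ((μ (Fin.last n)).prod (Measure.pi fun j => μ j.castSucc)) (Measure.pi μ) := by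
  convert (measurePreserving_piFinSuccAbove μ (Fin.last n)).symm with p
  all_goals simp [MeasurableEquiv.piFinSuccAbove_symm_apply, Fin.insertNthEquiv, Fin.insertNth_last']

theorem measurePreserving_finCons {n : ℕ} (μ : Fin (n + 1) → Measure α) [∀ j, SigmaFinite (μ j)] :
    MeasurePreserving (fun p : α × (Fin n → α) => (Fin.cons p.1 p.2 : Fin (n + 1) → α))
      ((μ 0).prod (Measure.pi fun j => μ j.succ)) (Measure.pi μ) := by
  convert (measurePreserving_piFinSuccAbove μ 0).symm with p
  all_goals simp [MeasurableEquiv.piFinSuccAbove_symm_apply, Fin.insertNthEquiv, Fin.insertNth_zero']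

theorem measurePreserving_finAppend_snoc_cons {m n : ℕ} (μ : Fin (m + 1 + (n + 1)) → Measure α)
    [∀ j, SigmaFinite (μ j)] :
    MeasurePreserving
      (fun p : (α × α) × ((Fin m → α) × (Fin n → α)) =>
        Fin.append (Fin.snoc p.2.1 p.1.1) (Fin.cons p.1.2 p.2.2))
      (((μ (Fin.castAdd _ (Fin.last m))).prod (μ (Fin.natAdd _ 0))).prod
        ((Measure.pi fun j => μ (Fin.castAdd _ j.castSucc)).prod
          (Measure.pi fun l => μ (Fin.natAdd _ l.succ))))
      (Measure.pi μ) :=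
  (measurePreserving_finAppend μ).comp
    (((measurePreserving_finSnoc _).prod (measurePreserving_finCons _)).comp
      (measurePreserving_prodProdProdComm _ _ _ _))

end MeasureTheory

theorem measurable_pathProd {N : ℕ} {g : Fin N → ℝ → ℝ → ℝ}
    (hg : ∀ k, Measurable (Function.uncurry (g k))) : Measurable (pathProd N g) :=
  Finset.measurable_prod _ fun k _ =>
    ((hg k).comp (f := fun x : Fin (N + 1) → ℝ => (x k.castSucc, x k.succ))
      (by fun_prop)).ennreal_ofReal

theorem pathProd_append_snoc_cons {m n : ℕ} (g : Fin (m + 1 + n) → ℝ → ℝ → ℝ)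
    (y : Fin m → ℝ) (a b : ℝ) (z : Fin n → ℝ) :
    pathProd (m + 1 + n) g
        (Fin.append (m := m + 1) (n := n + 1) (Fin.snoc y a) (Fin.cons b z)) =
      pathProd m (fun j => g (Fin.castAdd n j.castSucc)) (Fin.snoc y a)
        * ENNReal.ofReal (g (Fin.castAdd n (Fin.last m)) a b)
        * pathProd n (fun l => g (Fin.natAdd (m + 1) l)) (Fin.cons b z) := by
  -- definitional, but `Fin.append_left` / `Fin.append_right` only fire on these normal forms
  have h1 : ∀ j : Fin (m + 1), (Fin.castAdd n j).castSucc = Fin.castAdd (n + 1) j := fun _ => rfl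
  have h2 : ∀ j : Fin m, (Fin.castAdd n j.castSucc).succ = Fin.castAdd (n + 1) j.succ :=
    fun _ => rfl
  have h3 : (Fin.castAdd n (Fin.last m)).succ = Fin.natAdd (m + 1) (0 : Fin (n + 1)) :=
    Fin.ext rfl
  have h4 : ∀ l : Fin n, (Fin.natAdd (m + 1) l).castSucc = Fin.natAdd (m + 1) l.castSucc :=
    fun _ => rfl
  have h5 : ∀ l : Fin n, (Fin.natAdd (m + 1) l).succ = Fin.natAdd (m + 1) l.succ := fun _ => rfl
  simp only [pathProd, Fin.prod_univ_add, Fin.prod_univ_castSucc, h1, h2, h3, h4, h5,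
    Fin.append_left, Fin.append_right, Fin.snoc_last, Fin.cons_zero]

theorem downPot_eq_lintegral_pathProd {N j k : ℕ} (μ : Fin (N + 1) → Measure ℝ)
    (g : Fin N → ℝ → ℝ → ℝ) (hj : j ≤ N) (hk : N - j = k) (x : ℝ) :
    downPot N μ g j hj x =
      ∫⁻ z : Fin k → ℝ, pathProd k (fun l => g ⟨j + l, by omega⟩) (Fin.cons x z)
        ∂Measure.pi fun l : Fin k => μ ⟨j + 1 + l, by omega⟩ := by
  subst hk
  rfl

/-- With `N = m + 1 + n`, the index type `Fin (N + 1)` is definitionally `Fin ((m + 1) + (n + 1))`,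
so a path is `Fin.append` of its first `m + 1` and last `n + 1` coordinates. -/
theorem map_pair_withDensity_pathProd_add {m n : ℕ} (μ : Fin (m + 1 + n + 1) → Measure ℝ)
    [∀ j, SigmaFinite (μ j)] (g : Fin (m + 1 + n) → ℝ → ℝ → ℝ)
    (hg : ∀ k, Measurable (Function.uncurry (g k))) :
    Measure.map (fun x : Fin (m + 1 + n + 1) → ℝ => (x ⟨m, by omega⟩, x ⟨m + 1, by omega⟩))
        ((Measure.pi μ).withDensity (pathProd _ g))
      = ((μ ⟨m, by omega⟩).prod (μ ⟨m + 1, by omega⟩)).withDensity fun p =>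
          upPot _ μ g m (by omega) p.1 * ENNReal.ofReal (g ⟨m, by omega⟩ p.1 p.2)
            * downPot _ μ g (m + 1) (by omega) p.2 := by
  have hsuffix : (Measure.pi fun l : Fin n => μ (Fin.natAdd (m + 1) l.succ)) =
      Measure.pi fun l : Fin n => μ ⟨m + 1 + 1 + l, by omega⟩ := by
    refine congrArg Measure.pi (funext fun l => congrArg μ (Fin.ext ?_))
    simp only [Fin.val_natAdd, Fin.val_succ]
    omega
  have he := measurePreserving_finAppend_snoc_cons μ
  rw [hsuffix] at he
  refine (he.map_withDensity_eq_withDensity_lintegral (by fun_prop) (fun p => ?_)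
    (measurable_pathProd (N := m + 1 + n) hg)).trans (congrArg _ (funext fun p => ?_))
  · change (Fin.append _ _ (Fin.castAdd (n + 1) (Fin.last m)),
      Fin.append _ _ (Fin.natAdd (m + 1) 0)) = p.1
    simp
  · have hA : Measurable fun y : Fin m → ℝ =>
        pathProd m (fun j => g (Fin.castAdd n j.castSucc)) (Fin.snoc y p.1) :=
      (measurable_pathProd fun _ => hg _).comp (by fun_prop)
    have hB : Measurable fun z : Fin n → ℝ =>
        pathProd n (fun l => g (Fin.natAdd (m + 1) l)) (Fin.cons p.2 z) :=
      (measurable_pathProd fun _ => hg _).comp (by fun_prop)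
    simp only [pathProd_append_snoc_cons]
    rw [lintegral_prod_mul (hA.mul_const _).aemeasurable hB.aemeasurable, lintegral_mul_const _ hA,
      downPot_eq_lintegral_pathProd μ g _ (by omega : m + 1 + n - (m + 1) = n)]
    rfl

theorem map_pair_withDensity_pathProd_general (N : ℕ)
    (μ : Fin (N + 1) → Measure ℝ) (hμ : ∀ j, SigmaFinite (μ j))
    (g : Fin N → ℝ → ℝ → ℝ)
    (hg : ∀ k, Measurable (Function.uncurry (g k))) :
    ∀ i : Fin N,
      Measure.map (fun x : Fin (N + 1) → ℝ => (x i.castSucc, x i.succ))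
          ((Measure.pi μ).withDensity (pathProd N g))
        = ((μ i.castSucc).prod (μ i.succ)).withDensity fun p =>
            upPot N μ g i.val i.isLt.le p.1
              * ENNReal.ofReal (g i p.1 p.2)
              * downPot N μ g (i.val + 1) i.isLt p.2 := by
  rintro ⟨i, hi⟩
  obtain ⟨n, rfl⟩ := Nat.exists_eq_add_of_le hi
  exact map_pair_withDensity_pathProd_add μ g hg

/-- Two-time joint marginal at consecutive times of a pairwise-factorized measure: if `P`
has density `∏_k g_k(x_k, x_{k+1})` with respect to `μ₀ ⊗ ⋯ ⊗ μ_N`, then the joint law of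
the coordinates `(i, i+1)` under `P` has density `(x, y) ↦ u_i(x)·g_i(x,y)·d_{i+1}(y)`
with respect to `μ_i ⊗ μ_{i+1}`. -/
theorem map_pair_withDensity_pathProd (N : ℕ) (hN : 1 ≤ N)
    (μ : Fin (N + 1) → Measure ℝ) (hμ : ∀ j, SigmaFinite (μ j))
    (g : Fin N → ℝ → ℝ → ℝ)
    (hg : ∀ k, Measurable (Function.uncurry (g k)))
    (hg0 : ∀ k x y, 0 ≤ g k x y)
    (hint : (∫⁻ x : Fin (N + 1) → ℝ, pathProd N g x ∂(Measure.pi μ)) ≠ ⊤) :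
    ∀ i : Fin N,
      Measure.map (fun x : Fin (N + 1) → ℝ => (x i.castSucc, x i.succ))
          ((Measure.pi μ).withDensity (pathProd N g))
        = ((μ i.castSucc).prod (μ i.succ)).withDensity fun p =>
            upPot N μ g i.val i.isLt.le p.1
              * ENNReal.ofReal (g i p.1 p.2)
              * downPot N μ g (i.val + 1) i.isLt p.2 :=
  map_pair_withDensity_pathProd_general N μ hμ g hg
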